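/- arXiv:2311.02131 — 4 statements merged into one kernel-verified Lean document; each statement's English description precedes it below -/
import Mathlib

section
/- The quantity φ(g,S) := β_{g(S)}/β_S (with notation as above) is independent of the choice of the system of representatives S of P(W), and g ↦ φ(g) := φ(g,S) is a group homomorphism from GL(W) to F^*. -/
/-!
A linear automorphism `f` of `W` permutes the points of `P(W)`, so it sends each representative
`s ∈ S` to a nonzero multiple `c s • σ s` of a representative `σ s ∈ T`, with `σ : S → T` a
bijection. Hence for every linear `h : W → L`, `∏_{s ∈ S} h (f s) = (∏_s c s) · ∏_{t ∈ T} h t`,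
where the constant `∏_s c s` does not depend on `h`. Taking `h = α ∘ g` and `h = α` gives the
independence of `S` (with `f = id`) and `φ(g g') = φ(g) φ(g')` (with `f = g'`, `T = S`).
-/

/-- `S` is a system of representatives for the projective space
`P(W) = (W \ {0}) / Fˣ`. -/
def IsProjRepSystem (F : Type*) {W : Type*} [Field F] [AddCommGroup W] [Module F W]
    (S : Finset W) : Prop :=
  (0 : W) ∉ S ∧ ∀ w : W, w ≠ 0 → ∃! s : W, s ∈ S ∧ ∃ c : F, c ≠ 0 ∧ w = c • s

namespace IsProjRepSystem

variable {F W : Type*} [Field F] [AddCommGroup W] [Module F W] {S T : Finset W}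

theorem ne_zero (hS : IsProjRepSystem F S) {s : W} (hs : s ∈ S) : s ≠ 0 :=
  fun h => hS.1 (h ▸ hs)

theorem eq_of_eq_smul (hS : IsProjRepSystem F S) {s₁ s₂ : W} (h₁ : s₁ ∈ S) (h₂ : s₂ ∈ S)
    {c : F} (h : s₁ = c • s₂) : s₁ = s₂ := by
  have hc : c ≠ 0 := by
    rintro rfl
    exact hS.ne_zero h₁ (by simpa using h)
  exact (hS.2 s₁ (hS.ne_zero h₁)).unique ⟨h₁, 1, one_ne_zero, (one_smul F s₁).symm⟩
    ⟨h₂, c, hc, h⟩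

theorem exists_bijOn_map_eq_smul (hS : IsProjRepSystem F S) (hT : IsProjRepSystem F T)
    (f : W ≃ₗ[F] W) :
    ∃ σ : W → W, ∃ c : W → F, Set.BijOn σ S T ∧ ∀ s ∈ S, f s = c s • σ s := by
  have hrep : ∀ s : W, ∃ t : W, ∃ c : F, s ∈ S → t ∈ T ∧ f s = c • t := by
    intro s
    by_cases hs : s ∈ S
    · have hfs : f s ≠ 0 := by simpa using hS.ne_zero hs
      obtain ⟨t, ⟨ht, c, -, hc⟩, -⟩ := hT.2 (f s) hfs
      exact ⟨t, c, fun _ => ⟨ht, hc⟩⟩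
    · exact ⟨0, 0, fun h => absurd h hs⟩
  choose σ c hσ using hrep
  refine ⟨σ, c, ⟨fun s hs => (hσ s hs).1, ?_, ?_⟩, fun s hs => (hσ s hs).2⟩
  · intro s₁ h₁ s₂ h₂ he
    have hc₂ : c s₂ ≠ 0 := by
      rintro h0
      exact hS.ne_zero h₂ (by simpa [h0] using (hσ s₂ h₂).2)
    refine hS.eq_of_eq_smul h₁ h₂ (c := c s₁ * (c s₂)⁻¹) (f.injective ?_)
    rw [map_smul, (hσ s₁ h₁).2, (hσ s₂ h₂).2, he, smul_smul, mul_assoc,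
      inv_mul_cancel₀ hc₂, mul_one]
  · intro t ht
    obtain ⟨s, ⟨hs, e, -, he⟩, -⟩ := hS.2 (f.symm t) (by simpa using hT.ne_zero ht)
    refine ⟨s, hs, (hT.eq_of_eq_smul ht (hσ s hs).1 (c := e * c s) ?_).symm⟩
    rw [← smul_smul, ← (hσ s hs).2, ← map_smul, ← he, LinearEquiv.apply_symm_apply]

theorem exists_prod_map_eq_mul_prod (hS : IsProjRepSystem F S) (hT : IsProjRepSystem F T)
    (f : W ≃ₗ[F] W) (L : Type*) [CommSemiring L] [Algebra F L] :
    ∃ c : F, ∀ h : W →ₗ[F] L, ∏ s ∈ S, h (f s) = algebraMap F L c * ∏ t ∈ T, h t := by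
  obtain ⟨σ, c, hσ, hf⟩ := hS.exists_bijOn_map_eq_smul hT f
  refine ⟨∏ s ∈ S, c s, fun h => ?_⟩
  calc ∏ s ∈ S, h (f s) = ∏ s ∈ S, algebraMap F L (c s) * h (σ s) :=
        Finset.prod_congr rfl fun s hs => by rw [hf s hs, map_smul, Algebra.smul_def]
    _ = algebraMap F L (∏ s ∈ S, c s) * ∏ s ∈ S, h (σ s) := by
        rw [Finset.prod_mul_distrib, map_prod]
    _ = algebraMap F L (∏ s ∈ S, c s) * ∏ t ∈ T, h t := by
        rw [Finset.prod_nbij σ hσ.mapsTo hσ.injOn hσ.surjOn fun _ _ => rfl]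

theorem prod_map_mul_prod_comm (hS : IsProjRepSystem F S) (hT : IsProjRepSystem F T)
    (f : W ≃ₗ[F] W) {L : Type*} [CommSemiring L] [Algebra F L] (h₁ h₂ : W →ₗ[F] L) :
    (∏ s ∈ S, h₁ (f s)) * ∏ t ∈ T, h₂ t = (∏ t ∈ T, h₁ t) * ∏ s ∈ S, h₂ (f s) := by
  obtain ⟨c, hc⟩ := hS.exists_prod_map_eq_mul_prod hT f L
  rw [hc h₁, hc h₂]
  ring

end IsProjRepSystem

theorem phi_indep_and_hom_general {F L W : Type*} [Field F] [Field L] [Algebra F L]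
    [AddCommGroup W] [Module F W]
    (α : W →ₗ[F] L) :
    (∀ S T : Finset W, IsProjRepSystem F S → IsProjRepSystem F T →
      ∀ g : W ≃ₗ[F] W,
        (∏ w ∈ S, α (g w)) * ∏ w ∈ T, α w = (∏ w ∈ T, α (g w)) * ∏ w ∈ S, α w) ∧
    (∀ S : Finset W, IsProjRepSystem F S → ∀ g g' : W ≃ₗ[F] W,
        (∏ w ∈ S, α ((g * g') w)) * ∏ w ∈ S, α w =
          (∏ w ∈ S, α (g w)) * ∏ w ∈ S, α (g' w)) := by
  refine ⟨fun S T hS hT g => ?_, fun S hS g g' => ?_⟩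
  · simpa using hS.prod_map_mul_prod_comm hT (LinearEquiv.refl F W) (α ∘ₗ g.toLinearMap) α
  · simpa using hS.prod_map_mul_prod_comm hS g' (α ∘ₗ g.toLinearMap) α

/-- The quantity `φ(g,S) = β_{g(S)}/β_S` is independent of the choice of the
representative system `S`, and `g ↦ φ(g)` is a group homomorphism `GL(W) → L^*`.
(Both assertions are stated in cross-multiplied form to avoid division.) -/
theorem phi_indep_and_hom {F L W : Type*} [Field F] [Fintype F] [Field L] [Algebra F L]
    [AddCommGroup W] [Module F W] [Fintype W] [DecidableEq W]
    (α : W →ₗ[F] L) (hα : Function.Injective α) :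
    (∀ S T : Finset W, IsProjRepSystem F S → IsProjRepSystem F T →
      ∀ g : W ≃ₗ[F] W,
        (∏ w ∈ S, α (g w)) * ∏ w ∈ T, α w = (∏ w ∈ T, α (g w)) * ∏ w ∈ S, α w) ∧
    (∀ S : Finset W, IsProjRepSystem F S → ∀ g g' : W ≃ₗ[F] W,
        (∏ w ∈ S, α ((g * g') w)) * ∏ w ∈ S, α w =
          (∏ w ∈ S, α (g w)) * ∏ w ∈ S, α (g' w)) :=
  phi_indep_and_hom_general α
end

section
/- Let A be a Dedekind domain, Y a finitely generated projective A-module, and 0 ≠ x ∈ Y. Then there exists a unique minimal nonzero ideal 𝔠 of A (the conductor of x with respect to Y) such that x ∈ 𝔠Y; equivalently, the set of nonzero ideals 𝔫 with x ∈ 𝔫Y has a unique minimal element with respect to inclusion, and it equals the intersection of all such ideals. -/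
/-!
The conductor is the order ideal `O(x)`, generated by the values `f x` of all linear forms
`f : Y → A`. Every linear form maps `𝔫Y` into `𝔫`, so `x ∈ 𝔫Y` forces `O(x) ≤ 𝔫`. Conversely, a
projective `Y` is a direct summand of a free module, so `x = ∑ fᵢ(x) • yᵢ` for coordinate forms
`fᵢ`, whence `x ∈ O(x) Y`. Thus `x ∈ 𝔫Y ↔ O(x) ≤ 𝔫`, and `O(x)` is the least such ideal; it is
nonzero because `x ≠ 0`.
-/

namespace Module

variable {A : Type*} [CommSemiring A] {Y : Type*} [AddCommMonoid Y] [Module A Y]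

variable (A) in
def orderIdeal (x : Y) : Ideal A :=
  Ideal.span (Set.range fun f : Dual A Y => f x)

theorem orderIdeal_le_of_mem_smul_top {x : Y} {I : Ideal A}
    (hx : x ∈ I • (⊤ : Submodule A Y)) : orderIdeal A x ≤ I := by
  refine Ideal.span_le.mpr ?_
  rintro _ ⟨f, rfl⟩
  simpa [smul_eq_mul, Ideal.mul_top] using Submodule.smul_top_le_comap_smul_top I f hx

variable (A) in
theorem mem_orderIdeal_smul_top [Projective A Y] (x : Y) :
    x ∈ orderIdeal A x • (⊤ : Submodule A Y) := by
  obtain ⟨s, hs⟩ := projective_def.mp (inferInstance : Projective A Y)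
  have hcoord (y : Y) : s x y ∈ orderIdeal A x := Ideal.subset_span ⟨Finsupp.lapply y ∘ₗ s, rfl⟩
  have hsum : Finsupp.linearCombination A id (s x) ∈ orderIdeal A x • (⊤ : Submodule A Y) :=
    Submodule.finsuppSum_mem _ _ _ _ fun y _ => Submodule.smul_mem_smul (hcoord y) trivial
  rwa [hs x] at hsum

theorem orderIdeal_ne_zero [Projective A Y] {x : Y} (hx : x ≠ 0) : orderIdeal A x ≠ 0 :=
  fun h => hx <| by simpa [h] using mem_orderIdeal_smul_top A x

end Module

theorem exists_unique_conductor_general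
    {A : Type*} [CommRing A]
    {Y : Type*} [AddCommGroup Y] [Module A Y] [Module.Projective A Y]
    (x : Y) (hx : x ≠ 0) :
    ∃! 𝔠 : Ideal A,
      𝔠 ≠ 0 ∧ x ∈ 𝔠 • (⊤ : Submodule A Y) ∧
        (∀ 𝔫 : Ideal A, 𝔫 ≠ 0 → x ∈ 𝔫 • (⊤ : Submodule A Y) → 𝔠 ≤ 𝔫) ∧
        𝔠 = sInf {𝔫 : Ideal A | 𝔫 ≠ 0 ∧ x ∈ 𝔫 • (⊤ : Submodule A Y)} := by
  have hne := Module.orderIdeal_ne_zero (A := A) hx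
  have hmem := Module.mem_orderIdeal_smul_top A x
  have hmin (𝔫 : Ideal A) (_ : 𝔫 ≠ 0) (h : x ∈ 𝔫 • (⊤ : Submodule A Y)) :
      Module.orderIdeal A x ≤ 𝔫 :=
    Module.orderIdeal_le_of_mem_smul_top h
  have hInf : Module.orderIdeal A x =
      sInf {𝔫 : Ideal A | 𝔫 ≠ 0 ∧ x ∈ 𝔫 • (⊤ : Submodule A Y)} :=
    le_antisymm (le_sInf fun 𝔫 h => hmin 𝔫 h.1 h.2) (sInf_le ⟨hne, hmem⟩)
  exact ⟨Module.orderIdeal A x, ⟨hne, hmem, hmin, hInf⟩, fun 𝔡 h => h.2.2.2.trans hInf.symm⟩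

/-- Conductor of an element: for a Dedekind domain `A`, a finitely generated projective
`A`-module `Y` and `0 ≠ x ∈ Y`, there is a unique minimal nonzero ideal `𝔠` with
`x ∈ 𝔠Y`, and it equals the intersection of all nonzero ideals `𝔫` with `x ∈ 𝔫Y`. -/
theorem exists_unique_conductor
    {A : Type*} [CommRing A] [IsDomain A] [IsDedekindDomain A]
    {Y : Type*} [AddCommGroup Y] [Module A Y] [Module.Finite A Y] [Module.Projective A Y]
    (x : Y) (hx : x ≠ 0) :
    ∃! 𝔠 : Ideal A,
      𝔠 ≠ 0 ∧ x ∈ 𝔠 • (⊤ : Submodule A Y) ∧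
        (∀ 𝔫 : Ideal A, 𝔫 ≠ 0 → x ∈ 𝔫 • (⊤ : Submodule A Y) → 𝔠 ≤ 𝔫) ∧
        𝔠 = sInf {𝔫 : Ideal A | 𝔫 ≠ 0 ∧ x ∈ 𝔫 • (⊤ : Submodule A Y)} :=
  exists_unique_conductor_general x hx
end

section
/- Let A be a Dedekind domain and I a fractional ideal of A viewed as a rank-1 projective A-module. Then I contains a primitive element (i.e., an element x with x ∉ 𝔫I for every proper nonzero ideal 𝔫 ⊊ A) if and only if I is a free A-module (i.e., principal). -/
/-!
Given a primitive `x ∈ I`, pick a nonzero `w ∈ I` with `x ∈ (w)` (`w = x` unless `x = 0`).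
Since `I` is invertible, `w I⁻¹` is an integral ideal `𝔫` with `𝔫 I = (w)`; it is nonzero and
`x ∈ 𝔫 I`, so primitivity forces `𝔫 = A`, i.e. `I = (w)`. Conversely, if `I = (y)` and
`y ∈ 𝔫 (y)`, then `(y) ≤ 𝔫 (y) ≤ (y)`, and cancelling the invertible `(y)` gives `𝔫 = A`.
-/

open nonZeroDivisors

namespace FractionalIdeal

theorem exists_ne_zero_mem_and_mem_spanSingleton {R P : Type*} [CommRing R] {S : Submonoid R}
    [CommRing P] [Algebra R P] [IsLocalization S P] {I : FractionalIdeal S P} (hI : I ≠ 0)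
    {x : P} (hx : x ∈ I) :
    ∃ w ∈ I, w ≠ 0 ∧ x ∈ spanSingleton S w := by
  by_cases hx0 : x = 0
  · obtain ⟨w, hwI, hw0⟩ : ∃ w ∈ I, w ≠ 0 := by
      by_contra! h
      exact hI (eq_zero_iff.mpr h)
    exact ⟨w, hwI, hw0, hx0 ▸ zero_mem _⟩
  · exact ⟨x, hx, hx0, mem_spanSingleton_self S x⟩

variable {A K : Type*} [CommRing A] [IsDedekindDomain A] [Field K] [Algebra A K]
  [IsFractionRing A K]

theorem exists_coeIdeal_mul_eq_spanSingleton {I : FractionalIdeal A⁰ K} (hI : I ≠ 0)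
    {w : K} (hw : w ∈ I) : ∃ 𝔫 : Ideal A, (𝔫 : FractionalIdeal A⁰ K) * I = spanSingleton A⁰ w := by
  have hle : spanSingleton A⁰ w * I⁻¹ ≤ 1 :=
    mul_inv_cancel₀ hI ▸ mul_le_mul_left (spanSingleton_le_iff_mem.mpr hw) I⁻¹
  obtain ⟨𝔫, h𝔫⟩ := le_one_iff_exists_coeIdeal.mp hle
  exact ⟨𝔫, by rw [h𝔫, mul_assoc, inv_mul_cancel₀ hI, mul_one]⟩

theorem coeIdeal_eq_top_of_le_mul {J : FractionalIdeal A⁰ K} (hJ : J ≠ 0) {𝔫 : Ideal A}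
    (h : J ≤ 𝔫 * J) : 𝔫 = ⊤ := by
  have h𝔫J : (𝔫 : FractionalIdeal A⁰ K) * J = 1 * J :=
    (one_mul J).symm ▸ le_antisymm (mul_le_of_le_one_left' coeIdeal_le_one) h
  rw [← Ideal.one_eq_top, ← coeIdeal_eq_one (K := K)]
  exact mul_right_cancel₀ hJ h𝔫J

end FractionalIdeal

open FractionalIdeal in
theorem fractionalIdeal_primitive_iff_principal_general
    {A K : Type*} [CommRing A] [IsDedekindDomain A]
    [Field K] [Algebra A K] [IsFractionRing A K]
    (I : FractionalIdeal A⁰ K) (hI : I ≠ 0) :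
    (∃ x : K, x ∈ I ∧ ∀ 𝔫 : Ideal A, 𝔫 ≠ 0 → 𝔫 ≠ ⊤ →
        x ∉ ((𝔫 : FractionalIdeal A⁰ K) * I)) ↔
      ∃ y : K, I = FractionalIdeal.spanSingleton A⁰ y := by
  constructor
  · rintro ⟨x, hxI, hx⟩
    obtain ⟨w, hwI, hw0, hxw⟩ := exists_ne_zero_mem_and_mem_spanSingleton hI hxI
    obtain ⟨𝔫, h𝔫⟩ := exists_coeIdeal_mul_eq_spanSingleton hI hwI
    have h𝔫0 : 𝔫 ≠ 0 := by
      rintro rfl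
      rw [Ideal.zero_eq_bot, coeIdeal_bot, zero_mul, eq_comm,
        spanSingleton_eq_zero_iff] at h𝔫
      exact hw0 h𝔫
    have h𝔫top : 𝔫 = ⊤ := by_contra fun htop => hx 𝔫 h𝔫0 htop (h𝔫 ▸ hxw)
    rw [h𝔫top, coeIdeal_top, one_mul] at h𝔫
    exact ⟨w, h𝔫⟩
  · rintro ⟨y, rfl⟩
    exact ⟨y, mem_spanSingleton_self A⁰ y, fun 𝔫 _ htop hy =>
      htop (coeIdeal_eq_top_of_le_mul hI (spanSingleton_le_iff_mem.mpr hy))⟩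

/-- A fractional ideal `I` of a Dedekind domain `A` contains a primitive element
(an `x ∈ I` with `x ∉ 𝔫I` for every proper nonzero ideal `𝔫 ⊊ A`) if and only if
`I` is principal (free of rank one). -/
theorem fractionalIdeal_primitive_iff_principal
    {A K : Type*} [CommRing A] [IsDomain A] [IsDedekindDomain A]
    [Field K] [Algebra A K] [IsFractionRing A K]
    (I : FractionalIdeal A⁰ K) (hI : I ≠ 0) :
    (∃ x : K, x ∈ I ∧ ∀ 𝔫 : Ideal A, 𝔫 ≠ 0 → 𝔫 ≠ ⊤ →
        x ∉ ((𝔫 : FractionalIdeal A⁰ K) * I)) ↔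
      ∃ y : K, I = FractionalIdeal.spanSingleton A⁰ y :=
  fractionalIdeal_primitive_iff_principal_general I hI
end

section
/- Let A be a Drinfeld coefficient ring, 𝔞 ∈ I(A), x ∈ K \ 𝔞. Define r(x,𝔞) = min{deg y : y ∈ K, y ≡ x mod 𝔞} and w(x,𝔞) = dim_{F_q}{a ∈ 𝔞 : deg a ≤ r(x,𝔞)}. Then Z_{x,𝔞}(S) = Q_{r(x,𝔞)} Z_{0,𝔞}(S) + q^{w(x,𝔞)} S^{r(x,𝔞)}, where Q_i cuts off all terms of degree ≤ i of a formal Laurent series. In particular, when evaluating at a real number S ≥ 1 (assuming convergence in a suitable sense, or as an inequality of all truncated partial sums), Z_{x,𝔞}(S) > Z_{0,𝔞}(S). -/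
/-!
Let `y₀` be a representative of `x + 𝔞` of minimal degree `r`. Translation by `y₀` maps `𝔞`
onto the coset, and by the ultrametric inequality it preserves degrees `n > r`, while it maps
`𝔞_r = {a ∈ 𝔞 : a = 0 ∨ deg a ≤ r}` onto the coset elements of degree `r`. So `Z_{x,𝔞}` and
`Z_{0,𝔞}` differ only in degrees `≤ r`, where `Z_{x,𝔞}` has the single term `#𝔞_r S^r` and
`Z_{0,𝔞}` has `Σ_{n ≤ r} #{a ∈ 𝔞 : a ≠ 0, deg a = n} S^n`. As `#𝔞_r` is one more than the sum of
these coefficients, the first term is larger as soon as `S ≥ 1`.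
-/

open Finset

/-- `deg 0` stands for `-∞` and is a junk value: the axioms say nothing about `0`. -/
structure IsUltrametricDegree {K : Type*} [AddGroup K] (deg : K → ℤ) : Prop where
  deg_neg : ∀ u : K, u ≠ 0 → deg (-u) = deg u
  deg_add_le : ∀ u v : K, u ≠ 0 → v ≠ 0 → u + v ≠ 0 → deg (u + v) ≤ max (deg u) (deg v)

namespace IsUltrametricDegree

variable {K : Type*} [AddGroup K] {deg : K → ℤ}

theorem add_ne_zero_of_deg_ne (h : IsUltrametricDegree deg) {u v : K} (hv : v ≠ 0)
    (huv : deg u ≠ deg v) : u + v ≠ 0 := by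
  intro h0
  rw [eq_neg_of_add_eq_zero_left h0] at huv
  exact huv (h.deg_neg v hv)

theorem deg_add_of_lt (h : IsUltrametricDegree deg) {u v : K} (hu : u ≠ 0) (hv : v ≠ 0)
    (hlt : deg v < deg u) : deg (u + v) = deg u := by
  have huv : u + v ≠ 0 := h.add_ne_zero_of_deg_ne hv hlt.ne'
  have hle : deg (u + v) ≤ max (deg u) (deg v) := h.deg_add_le u v hu hv huv
  have hge : deg (u + v + -v) ≤ max (deg (u + v)) (deg (-v)) :=
    h.deg_add_le _ _ huv (neg_ne_zero.2 hv) (by rwa [add_neg_cancel_right])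
  rw [add_neg_cancel_right, h.deg_neg v hv] at hge
  omega

theorem deg_sub_le (h : IsUltrametricDegree deg) {u v : K} (hu : u ≠ 0) (hv : v ≠ 0)
    (huv : u - v ≠ 0) : deg (u - v) ≤ max (deg u) (deg v) := by
  have := h.deg_add_le u (-v) hu (neg_ne_zero.2 hv) (by rwa [← sub_eq_add_neg])
  rwa [← sub_eq_add_neg, h.deg_neg v hv] at this

theorem ne_zero_and_deg_eq_iff_add (h : IsUltrametricDegree deg) {y₀ : K} (hy₀ : y₀ ≠ 0)
    {n : ℤ} (hn : deg y₀ < n) (a : K) :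
    a ≠ 0 ∧ deg a = n ↔ a + y₀ ≠ 0 ∧ deg (a + y₀) = n := by
  constructor
  · rintro ⟨ha, rfl⟩
    exact ⟨h.add_ne_zero_of_deg_ne hy₀ hn.ne', h.deg_add_of_lt ha hy₀ hn⟩
  · rintro ⟨hs, hdeg⟩
    have ha : a ≠ 0 := by
      rintro rfl
      rw [zero_add] at hdeg
      omega
    have := h.deg_add_of_lt hs (neg_ne_zero.2 hy₀) (by rw [h.deg_neg y₀ hy₀, hdeg]; exact hn)
    rw [add_neg_cancel_right, hdeg] at this
    exact ⟨ha, this⟩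

end IsUltrametricDegree

theorem AddSubgroup.ne_zero_of_sub_mem {K : Type*} [AddGroup K] {𝔞 : AddSubgroup K} {x y : K}
    (hx : x ∉ 𝔞) (hy : y - x ∈ 𝔞) : y ≠ 0 := by
  rintro rfl
  exact hx (by simpa using 𝔞.neg_mem hy)

section Coset

variable {K : Type*} [AddGroup K] {deg : K → ℤ} {𝔞 : AddSubgroup K} {x y₀ : K}

theorem add_sub_mem_iff (hy₀ : y₀ - x ∈ 𝔞) (a : K) : a + y₀ - x ∈ 𝔞 ↔ a ∈ 𝔞 := by
  rw [add_sub_assoc]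
  exact 𝔞.add_mem_cancel_right hy₀

theorem card_coset_deg_eq_of_lt (h : IsUltrametricDegree deg) (hy₀x : y₀ - x ∈ 𝔞)
    (hy₀ : y₀ ≠ 0) {n : ℤ} (hn : deg y₀ < n) :
    Nat.card {y : K | y - x ∈ 𝔞 ∧ y ≠ 0 ∧ deg y = n} =
      Nat.card {a : K | a ∈ 𝔞 ∧ a ≠ 0 ∧ deg a = n} :=
  Nat.card_congr <| .symm <| (Equiv.addRight y₀).subtypeEquiv fun a =>
    and_congr (add_sub_mem_iff hy₀x a).symm (h.ne_zero_and_deg_eq_iff_add hy₀ hn a)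

theorem card_coset_deg_eq_card_deg_le (h : IsUltrametricDegree deg) (hx : x ∉ 𝔞)
    (hy₀x : y₀ - x ∈ 𝔞) (hr_min : ∀ y : K, y ≠ 0 → y - x ∈ 𝔞 → deg y₀ ≤ deg y) :
    Nat.card {y : K | y - x ∈ 𝔞 ∧ y ≠ 0 ∧ deg y = deg y₀} =
      Nat.card {a : K | a ∈ 𝔞 ∧ (a = 0 ∨ deg a ≤ deg y₀)} := by
  have hy₀ : y₀ ≠ 0 := 𝔞.ne_zero_of_sub_mem hx hy₀x
  refine Nat.card_congr <| .symm <| (Equiv.addRight y₀).subtypeEquiv fun a => ?_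
  simp only [Set.mem_ofPred_eq, Equiv.coe_addRight, add_sub_mem_iff hy₀x]
  refine and_congr_right fun ha => ?_
  have hmem : a + y₀ - x ∈ 𝔞 := (add_sub_mem_iff hy₀x a).2 ha
  have hs : a + y₀ ≠ 0 := 𝔞.ne_zero_of_sub_mem hx hmem
  have hge : deg y₀ ≤ deg (a + y₀) := hr_min _ hs hmem
  constructor
  · rintro (rfl | hle)
    · simp [hy₀]
    · rcases eq_or_ne a 0 with rfl | ha0
      · simp [hy₀]
      · have := h.deg_add_le a y₀ ha0 hy₀ hs
        exact ⟨hs, by omega⟩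
  · rintro ⟨-, hdeg⟩
    rcases eq_or_ne a 0 with ha0 | ha0
    · exact .inl ha0
    · have := h.deg_sub_le hs hy₀ (by rwa [add_sub_cancel_right])
      rw [add_sub_cancel_right, hdeg, max_self] at this
      exact .inr this

theorem card_coset_deg_eq_zero_of_lt {r : ℤ} (hr_min : ∀ y : K, y ≠ 0 → y - x ∈ 𝔞 → r ≤ deg y)
    {n : ℤ} (hn : n < r) : Nat.card {y : K | y - x ∈ 𝔞 ∧ y ≠ 0 ∧ deg y = n} = 0 := by
  have : IsEmpty {y : K | y - x ∈ 𝔞 ∧ y ≠ 0 ∧ deg y = n} :=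
    ⟨fun ⟨y, hy, hy0, hdeg⟩ => by have := hr_min y hy0 hy; omega⟩
  exact Nat.card_of_isEmpty

end Coset

theorem card_zero_or_deg_le_eq_one_add_sum {K : Type*} [Zero K] (deg : K → ℤ) {s : Set K}
    (h0 : (0 : K) ∈ s) {n₀ : ℤ} (hlb : ∀ a ∈ s, a ≠ 0 → n₀ ≤ deg a)
    (hfin : ∀ n : ℤ, {a : K | a ∈ s ∧ a ≠ 0 ∧ deg a = n}.Finite) (r : ℤ) :
    Nat.card {a : K | a ∈ s ∧ (a = 0 ∨ deg a ≤ r)} =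
      1 + ∑ n ∈ Icc n₀ r, Nat.card {a : K | a ∈ s ∧ a ≠ 0 ∧ deg a = n} := by
  set level : ℤ → Set K := fun n => {a : K | a ∈ s ∧ a ≠ 0 ∧ deg a = n}
  have hunion : {a : K | a ∈ s ∧ (a = 0 ∨ deg a ≤ r)} =
      insert 0 (⋃ n ∈ (Icc n₀ r : Set ℤ), level n) := by
    ext a
    simp only [level, Set.mem_ofPred_eq, Set.mem_insert_iff, Set.mem_iUnion, coe_Icc,
      Set.mem_Icc, exists_prop]
    constructor
    · rintro ⟨ha, rfl | hle⟩
      · exact .inl rfl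
      · rcases eq_or_ne a 0 with ha0 | ha0
        · exact .inl ha0
        · exact .inr ⟨deg a, ⟨hlb a ha ha0, hle⟩, ha, ha0, rfl⟩
    · rintro (rfl | ⟨n, ⟨-, hn⟩, ha, -, rfl⟩)
      · exact ⟨h0, .inl rfl⟩
      · exact ⟨ha, .inr hn⟩
  have hdisj : (Icc n₀ r : Set ℤ).PairwiseDisjoint level := fun m _ n _ hmn =>
    Set.disjoint_left.2 fun _ hm hn => hmn (hm.2.2.symm.trans hn.2.2)
  have h0U : (0 : K) ∉ ⋃ n ∈ (Icc n₀ r : Set ℤ), level n := by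
    simp [level]
  rw [hunion, Nat.card_coe_set_eq, Set.ncard_insert_of_notMem h0U
      ((finite_toSet _).biUnion fun n _ => hfin n),
    (finite_toSet _).ncard_biUnion (fun n _ => hfin n) hdisj, finsum_mem_coe_finset, add_comm]
  simp only [Nat.card_coe_set_eq]

/-- In Laurent-series notation the hypotheses say `b = Q_r a + (1 + Σ_{n₀ ≤ n ≤ r} a n) S^r`. -/
theorem sum_mul_zpow_lt_of_truncation {a b : ℤ → ℕ} {n₀ r N : ℤ} (hn₀ : n₀ ≤ r) (hN : r ≤ N)
    (hgt : ∀ n, r < n → b n = a n) (hr : b r = 1 + ∑ n ∈ Icc n₀ r, a n)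
    (hlt : ∀ n, n < r → b n = 0) {S : ℝ} (hS : 1 ≤ S) :
    ∑ n ∈ Icc n₀ N, (a n : ℝ) * S ^ n < ∑ n ∈ Icc n₀ N, (b n : ℝ) * S ^ n := by
  have hsplit : Icc n₀ N = Icc n₀ r ∪ Ioc r N := by
    ext n
    simp only [mem_Icc, mem_union, mem_Ioc]
    omega
  have hdisj : Disjoint (Icc n₀ r) (Ioc r N) := by
    simp only [disjoint_left, mem_Icc, mem_Ioc]
    omega
  have htail : ∑ n ∈ Ioc r N, (a n : ℝ) * S ^ n = ∑ n ∈ Ioc r N, (b n : ℝ) * S ^ n :=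
    sum_congr rfl fun n hn => by rw [hgt n (mem_Ioc.1 hn).1]
  have hhead_b : ∑ n ∈ Icc n₀ r, (b n : ℝ) * S ^ n = (b r : ℝ) * S ^ r :=
    sum_eq_single_of_mem r (mem_Icc.2 ⟨hn₀, le_rfl⟩) fun n hn hnr => by
      rw [hlt n (lt_of_le_of_ne (mem_Icc.1 hn).2 hnr), Nat.cast_zero, zero_mul]
  have hhead_a : ∑ n ∈ Icc n₀ r, (a n : ℝ) * S ^ n ≤ (∑ n ∈ Icc n₀ r, (a n : ℝ)) * S ^ r := by
    rw [sum_mul]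
    exact sum_le_sum fun n hn =>
      mul_le_mul_of_nonneg_left (zpow_le_zpow_right₀ hS (mem_Icc.1 hn).2) (Nat.cast_nonneg _)
  have hSr : 0 < S ^ r := zpow_pos (zero_lt_one.trans_le hS) r
  rw [hsplit, sum_union hdisj, sum_union hdisj, htail, hhead_b, hr]
  push_cast
  nlinarith

/-- Proposition 8.4 and Corollary 8.5: for `x ∉ 𝔞`, with
`r = r(x,𝔞) = min{deg y : y ≡ x mod 𝔞}` and `w = w(x,𝔞) = dim_{F_q} 𝔞_r`,
one has `Z_{x,𝔞}(S) = Q_r Z_{0,𝔞}(S) + q^w S^r` (stated coefficientwise: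
the coefficients of `Z_{x,𝔞}` and `Z_{0,𝔞}` agree in degrees `> r`, the coefficient
of `Z_{x,𝔞}` in degree `r` is `q^w = #𝔞_r`, and its coefficients vanish below `r`);
consequently every truncated partial sum of `Z_{x,𝔞}(S)` strictly exceeds that of
`Z_{0,𝔞}(S)` at any real `S ≥ 1`.  Here `deg` is a nonarchimedean degree function. -/
theorem partialZeta_expansion_and_gt
    {K : Type*} [Field K] (deg : K → ℤ)
    (hneg : ∀ u : K, u ≠ 0 → deg (-u) = deg u)
    (hna : ∀ u v : K, u ≠ 0 → v ≠ 0 → u + v ≠ 0 → deg (u + v) ≤ max (deg u) (deg v))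
    (𝔞 : AddSubgroup K) (x : K) (hx : x ∉ 𝔞)
    (r : ℤ)
    (hr_ex : ∃ y : K, y - x ∈ 𝔞 ∧ deg y = r)
    (hr_min : ∀ y : K, y ≠ 0 → y - x ∈ 𝔞 → r ≤ deg y)
    (n₀ : ℤ)
    (hlb : ∀ y : K, y ≠ 0 → (y ∈ 𝔞 ∨ y - x ∈ 𝔞) → n₀ ≤ deg y)
    (hfin : ∀ n : ℤ, {y : K | (y ∈ 𝔞 ∨ y - x ∈ 𝔞) ∧ y ≠ 0 ∧ deg y = n}.Finite) :
    (∀ n : ℤ, r < n →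
      Nat.card {y : K | y - x ∈ 𝔞 ∧ y ≠ 0 ∧ deg y = n} =
        Nat.card {a : K | a ∈ 𝔞 ∧ a ≠ 0 ∧ deg a = n}) ∧
    Nat.card {y : K | y - x ∈ 𝔞 ∧ y ≠ 0 ∧ deg y = r} =
      Nat.card {a : K | a ∈ 𝔞 ∧ (a = 0 ∨ deg a ≤ r)} ∧
    (∀ n : ℤ, n < r → Nat.card {y : K | y - x ∈ 𝔞 ∧ y ≠ 0 ∧ deg y = n} = 0) ∧
    (∀ S : ℝ, 1 ≤ S → ∀ N : ℤ, r ≤ N →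
      (∑ n ∈ Finset.Icc n₀ N,
          (Nat.card {a : K | a ∈ 𝔞 ∧ a ≠ 0 ∧ deg a = n} : ℝ) * S ^ n) <
        ∑ n ∈ Finset.Icc n₀ N,
          (Nat.card {y : K | y - x ∈ 𝔞 ∧ y ≠ 0 ∧ deg y = n} : ℝ) * S ^ n) := by
  have hdeg : IsUltrametricDegree deg := ⟨hneg, hna⟩
  obtain ⟨y₀, hy₀x, rfl⟩ := hr_ex
  have hy₀ : y₀ ≠ 0 := 𝔞.ne_zero_of_sub_mem hx hy₀x
  have hgt := fun n (hn : deg y₀ < n) => card_coset_deg_eq_of_lt hdeg hy₀x hy₀ hn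
  have heq := card_coset_deg_eq_card_deg_le hdeg hx hy₀x hr_min
  have hlt := fun n (hn : n < deg y₀) => card_coset_deg_eq_zero_of_lt (deg := deg) hr_min hn
  have hcount : Nat.card {a : K | a ∈ 𝔞 ∧ (a = 0 ∨ deg a ≤ deg y₀)} =
      1 + ∑ n ∈ Icc n₀ (deg y₀), Nat.card {a : K | a ∈ 𝔞 ∧ a ≠ 0 ∧ deg a = n} :=
    card_zero_or_deg_le_eq_one_add_sum deg (s := 𝔞) 𝔞.zero_mem
      (fun a ha ha0 => hlb a ha0 (.inl ha))
      (fun n => (hfin n).subset fun a ⟨ha, ha0, hn⟩ => ⟨.inl ha, ha0, hn⟩) _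
  refine ⟨hgt, heq, hlt, fun S hS N hN => ?_⟩
  exact sum_mul_zpow_lt_of_truncation (hlb y₀ hy₀ (.inr hy₀x)) hN hgt (heq.trans hcount) hlt hS
end
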